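/- Let x ∈ A^ℤ be a uniformly recurrent sequence and let u be a nonempty prefix of x. Let v be a nonempty prefix of the derived sequence D_u(x), and set w = Θ_{x,u}(v)u. Then: w is a prefix of x; D_v(D_u(x)) = D_w(x); and Θ_{x,u} ∘ Θ_{D_u(x), v} = Θ_{x,w}. -/

import Mathlib

open MeasureTheory Filter Matrix Set

namespace PisotDE

variable {A B : Type*}

/-- Extension of a letter-to-word map to words, by concatenation. -/
def wordApply (σ : A → List B) (w : List A) : List B := w.flatMap σ

/-- Iterates of an endomorphism of the free monoid. -/
def substIter (σ : A → List A) : ℕ → A → List A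
  | 0 => fun a => [a]
  | n + 1 => fun a => wordApply (substIter σ n) (σ a)

/-- σ is a substitution: some letter a has σ(a) starting with a, and |σⁿ(b)| → ∞ for all b. -/
def IsSubstitution (σ : A → List A) : Prop :=
  (∃ a, (σ a).head? = some a) ∧
    ∀ b, Tendsto (fun n => (substIter σ n b).length) atTop atTop

/-- Incidence matrix: entry (i,j) counts occurrences of i in σ(j). -/
def incMat [Fintype A] [DecidableEq A] (σ : A → List A) : Matrix A A ℕ :=
  Matrix.of fun i j => (σ j).count i

/-- Primitivity: a power of the incidence matrix has all entries positive. -/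
def IsPrimitive [Fintype A] [DecidableEq A] (σ : A → List A) : Prop :=
  ∃ k : ℕ, ∀ i j, 0 < (incMat σ ^ k) i j

def IsLeftProper (σ : A → List A) : Prop := ∃ a, ∀ b, (σ b).head? = some a
def IsRightProper (σ : A → List A) : Prop := ∃ a, ∀ b, (σ b).getLast? = some a
def IsProper (σ : A → List A) : Prop := IsLeftProper σ ∧ IsRightProper σ

/-- The factor x_{[i, i+len-1]} of a bi-infinite sequence. -/
def subword (x : ℤ → A) (i : ℤ) (len : ℕ) : List A :=
  List.ofFn fun k : Fin len => x (i + (k : ℕ))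

/-- Language of a substitution: words occurring in some σⁿ(b). -/
def lang (σ : A → List A) : Set (List A) := { w | ∃ n b, w <:+: substIter σ n b }

/-- The substitutive subshift Ω_σ. -/
def Omega (σ : A → List A) : Set (ℤ → A) := { x | ∀ i len, subword x i len ∈ lang σ }

/-- The shift map. -/
def shift (x : ℤ → A) : ℤ → A := fun n => x (n + 1)

/-- The subshift generated by the sequence x (all sequences whose factors are factors of x). -/
def OmegaOf (x : ℤ → A) : Set (ℤ → A) :=
  { z | ∀ i len, ∃ j : ℤ, subword z i len = subword x j len }

/-- y is the image of x under the morphism σ acting on bi-infinite sequences,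
concatenating around position 0. -/
def SubstPt (σ : A → List B) (x : ℤ → A) (y : ℤ → B) : Prop :=
  ∃ p : ℤ → ℤ, p 0 = 0 ∧ (∀ n, p (n + 1) = p n + (σ (x n)).length) ∧
    ∀ (n : ℤ) (k : Fin (σ (x n)).length), y (p n + (k : ℕ)) = (σ (x n)).get k

/-- Image of a set of sequences under the substitution. -/
def substImg (σ : A → List A) (X : Set (ℤ → A)) : Set (ℤ → A) :=
  { y | ∃ x ∈ X, SubstPt σ x y }

/-- The cylinder [a] inside Ω_σ. -/
def cylOmega (σ : A → List A) (a : A) : Set (ℤ → A) := { x ∈ Omega σ | x 0 = a }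

/-- ξᵐ(Ω_ξ). -/
def towerBase (σ : A → List A) (m : ℕ) : Set (ℤ → A) := substImg (substIter σ m) (Omega σ)

/-- ξᵐ([a]). -/
def towerCylElem (σ : A → List A) (m : ℕ) (a : A) : Set (ℤ → A) :=
  { y | ∃ x, x ∈ cylOmega σ a ∧ SubstPt (substIter σ m) x y }

/-- The Kakutani-Rohlin piece S^{-k} ξᵐ([a]) (inside Ω_ξ). -/
def krPiece (σ : A → List A) (m : ℕ) (a : A) (k : ℕ) : Set (ℤ → A) :=
  { x ∈ Omega σ | shift^[k] x ∈ towerCylElem σ m a }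

/-- Entrance time of x into the base ξ^{n-1}(Ω_ξ). -/
noncomputable def rTime (σ : A → List A) (n : ℕ) (x : ℤ → A) : ℕ :=
  sInf { k : ℕ | shift^[k] x ∈ towerBase σ (n - 1) }

/-- The vector s_k(x): s_k(x)_a counts the i with r_k(x) < i ≤ r_{k+1}(x)
such that Sⁱx ∈ ξ^{k-1}([a]). -/
noncomputable def sVec (σ : A → List A) (k : ℕ) (x : ℤ → A) : A → ℤ :=
  fun a => (({ i : ℕ | rTime σ k x < i ∧ i ≤ rTime σ (k + 1) x ∧
      shift^[i] x ∈ towerCylElem σ (k - 1) a }).ncard : ℤ)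

/-- λ is an eigenvalue of the measure-theoretic system (Ω, S, μ):
there is a nonzero f ∈ L²(μ) with f∘S = λ f. -/
def IsEigenvalue [MeasurableSpace A] (μ : Measure (ℤ → A)) (lam : ℂ) : Prop :=
  ∃ f : (ℤ → A) → ℂ, MemLp f 2 μ ∧ ¬ f =ᵐ[μ] 0 ∧
    (fun x => f (shift x)) =ᵐ[μ] fun x => lam * f x

/-- Characteristic polynomial of a natural matrix, over ℂ. -/
noncomputable def charpolyC [Fintype A] [DecidableEq A] (M : Matrix A A ℕ) : Polynomial ℂ :=
  (M.map (Nat.cast : ℕ → ℂ)).charpoly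

/-- Pisot type: dominant real root β > 1, every other root β' has 0 < |β'| < 1. -/
def IsPisotType [Fintype A] [DecidableEq A] (M : Matrix A A ℕ) : Prop :=
  ∃ β : ℝ, 1 < β ∧ (charpolyC M).IsRoot (β : ℂ) ∧
    ∀ z : ℂ, (charpolyC M).IsRoot z → z ≠ (β : ℂ) → 0 < ‖z‖ ∧ ‖z‖ < 1

/-- Weakly irreducible Pisot type: the dominant root is a real Pisot number β > 1,
the other roots are algebraic conjugates of β, 0, or roots of unity. -/
def IsWIPisot [Fintype A] [DecidableEq A] (M : Matrix A A ℕ) : Prop :=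
  ∃ β : ℝ, 1 < β ∧ (charpolyC M).IsRoot (β : ℂ) ∧
    (∀ z : ℂ, Polynomial.aeval z (minpoly ℚ ((β : ℝ) : ℂ)) = 0 → z ≠ (β : ℂ) → ‖z‖ < 1) ∧
    ∀ z : ℂ, (charpolyC M).IsRoot z →
      (Polynomial.aeval z (minpoly ℚ ((β : ℝ) : ℂ)) = 0 ∨ z = 0 ∨ ∃ n : ℕ, 0 < n ∧ z ^ n = 1)

/-- Unimodularity: determinant ±1. -/
def IsUnimodular [Fintype A] [DecidableEq A] (M : Matrix A A ℕ) : Prop :=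
  (M.map (Nat.cast : ℕ → ℤ)).det = 1 ∨ (M.map (Nat.cast : ℕ → ℤ)).det = -1

/-- The transpose of the incidence matrix, with real entries. -/
noncomputable def MtR [Fintype A] [DecidableEq A] (σ : A → List A) : Matrix A A ℝ :=
  ((incMat σ).map (Nat.cast : ℕ → ℝ))ᵀ

/-- The vector μ⃗(n), μ⃗(n)_a = μ(ξ^{n-1}([a])). -/
noncomputable def muVec [MeasurableSpace A] (σ : A → List A) (μ : Measure (ℤ → A)) (n : ℕ) : A → ℝ :=
  fun a => (μ (towerCylElem σ (n - 1) a)).toReal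

/-- Rational independence of 1, α_1, …, α_m. -/
def RatIndepOne {m : ℕ} (α : Fin m → ℝ) : Prop :=
  ∀ (c₀ : ℤ) (c : Fin m → ℤ), (c₀ : ℝ) + ∑ i, (c i : ℝ) * α i = 0 →
    c₀ = 0 ∧ ∀ i, c i = 0

/-- The word u occurs in x at position i. -/
def occursAt (x : ℤ → A) (u : List A) (i : ℤ) : Prop :=
  ∀ k : Fin u.length, x (i + (k : ℕ)) = u.get k

/-- Uniform recurrence: every factor occurs with bounded gaps. -/
def UniformlyRecurrent (x : ℤ → A) : Prop :=
  ∀ u : List A, (∃ i, occursAt x u i) →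
    ∃ N : ℕ, ∀ i : ℤ, ∃ j : ℤ, i ≤ j ∧ j < i + (N : ℤ) ∧ occursAt x u j

/-- Return words to u of x. -/
def returnWords (x : ℤ → A) (u : List A) : Set (List A) :=
  { w | ∃ i j : ℤ, i < j ∧ occursAt x u i ∧ occursAt x u j ∧
      (∀ l : ℤ, i < l → l < j → ¬ occursAt x u l) ∧ w = subword x i (j - i).toNat }

/-- Circular code. -/
def IsCircularCode (R : Set (List A)) : Prop :=
  ∀ (l l' : List (List A)) (w s t : List A),
    (∀ v ∈ l, v ∈ R) → (∀ v ∈ l', v ∈ R) → w ∈ R → s ≠ [] →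
    w = t ++ s → l.flatten = s ++ l'.flatten ++ t → t = []

/-- p : ℤ → ℤ enumerates increasingly all occurrences of u in x, with p 0 = 0. -/
def IsOccEnum (x : ℤ → A) (u : List A) (p : ℤ → ℤ) : Prop :=
  p 0 = 0 ∧ StrictMono p ∧ (∀ n, occursAt x u (p n)) ∧ ∀ i, occursAt x u i → ∃ n, p n = i

/-- The n-th return word m_n in the decomposition of x along occurrences p. -/
def retWordAt (x : ℤ → A) (p : ℤ → ℤ) (n : ℤ) : List A :=
  subword x (p n) (p (n + 1) - p n).toNat

/-- (Θ, y) is the canonical return-word coding of x on u: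
Θ = Θ_{x,u} (on the letters occurring in y) and y = D_u(x), the derived sequence,
with letters 0,1,2,… given to return words in order of first appearance in (m_i)_{i ≥ 0}. -/
def IsReturnCoding (x : ℤ → A) (u : List A) (Θ : ℕ → List A) (y : ℤ → ℕ) : Prop :=
  ∃ p : ℤ → ℤ, IsOccEnum x u p ∧
    (∀ n : ℤ, Θ (y n) = retWordAt x p n) ∧
    (∀ n m : ℤ, y n = y m ↔ retWordAt x p n = retWordAt x p m) ∧
    (∀ n : ℤ, ∃ m : ℕ, y m = y n) ∧
    (∀ n : ℕ, y n ≤ Set.ncard { k : ℕ | ∃ m : ℕ, m < n ∧ y m = k })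

/-- Letters actually used by a derived sequence. -/
def usedLetters (y : ℤ → ℕ) : Set ℕ := { k | ∃ n : ℤ, y n = k }

/-- Primitivity of a substitution restricted to a set of letters. -/
def IsPrimitiveOn (τ : B → List B) (L : Set B) : Prop :=
  ∃ k : ℕ, 0 < k ∧ ∀ a ∈ L, ∀ b ∈ L, b ∈ substIter τ k a

/-- τ is the return substitution σ_u, i.e. Θ ∘ τ = σ ∘ Θ on the used letters. -/
def IsReturnSubst (σ : A → List A) (x : ℤ → A) (u : List A)
    (Θ : ℕ → List A) (y : ℤ → ℕ) (τ : ℕ → List ℕ) : Prop :=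
  IsReturnCoding x u Θ y ∧
    ∀ k ∈ usedLetters y, (∀ j ∈ τ k, j ∈ usedLetters y) ∧
      wordApply Θ (τ k) = wordApply σ (Θ k)

/-- x is not periodic for the shift. -/
def NotShiftPeriodic (x : ℤ → A) : Prop := ¬ ∃ p : ℤ, p ≠ 0 ∧ ∀ n, x (n + p) = x n

/-- The splitting ℝ^A = E⁰ ⊕ Eˢ ⊕ Eᵘ ⊕ Eᵇ into M_ξᵗ-invariant subspaces, with
E⁰ killed by M_ξᵗ, Eˢ contracted to 0 but never killed, Eᵘ expanded, Eᵇ bounded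
away from 0 and ∞ and never killed. -/
def IsStableSplitting [Fintype A] [DecidableEq A] (σ : A → List A)
    (E0 Es Eu Eb : Submodule ℝ (A → ℝ)) : Prop :=
  (∀ x : A → ℝ, ∃ x0 ∈ E0, ∃ xs ∈ Es, ∃ xu ∈ Eu, ∃ xb ∈ Eb, x = x0 + xs + xu + xb) ∧
  (∀ x0 ∈ E0, ∀ xs ∈ Es, ∀ xu ∈ Eu, ∀ xb ∈ Eb,
      x0 + xs + xu + xb = 0 → x0 = 0 ∧ xs = 0 ∧ xu = 0 ∧ xb = 0) ∧
  (∀ v ∈ Es, (MtR σ).mulVec v ∈ Es) ∧ (∀ v ∈ Eu, (MtR σ).mulVec v ∈ Eu) ∧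
  (∀ v ∈ Eb, (MtR σ).mulVec v ∈ Eb) ∧
  (∀ v ∈ E0, (MtR σ).mulVec v = 0) ∧
  (∀ v ∈ Es, v ≠ 0 → Tendsto (fun k => (MtR σ ^ k).mulVec v) atTop (nhds 0) ∧
      ∀ n, (MtR σ ^ n).mulVec v ≠ 0) ∧
  (∀ v ∈ Eu, v ≠ 0 → Tendsto (fun k => ‖(MtR σ ^ k).mulVec v‖) atTop atTop) ∧
  (∀ v ∈ Eb, v ≠ 0 → (∃ c C : ℝ, 0 < c ∧ ∀ k : ℕ, c ≤ ‖(MtR σ ^ k).mulVec v‖ ∧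
      ‖(MtR σ ^ k).mulVec v‖ ≤ C) ∧ ∀ n, (MtR σ ^ n).mulVec v ≠ 0)

/-- The map F(x) = (Σ_{k ≥ 1} ⟨s_k(x), (M_ξᵗ)ᵏ v(i)⟩)_{1 ≤ i ≤ m}. -/
noncomputable def Fmap [Fintype A] [DecidableEq A] (σ : A → List A) {m : ℕ}
    (v : Fin m → A → ℝ) (x : ℤ → A) : Fin m → ℝ :=
  fun i => ∑' k : ℕ,
    dotProduct (fun a => ((sVec σ (k + 1) x a : ℤ) : ℝ)) ((MtR σ ^ (k + 1)).mulVec (v i))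

/-- The canonical projection ℝ^m → ℝ^m/ℤ^m = 𝕋^m. -/
noncomputable def torusProj {m : ℕ} (z : Fin m → ℝ) : Fin m → AddCircle (1 : ℝ) :=
  fun i => (z i : AddCircle (1 : ℝ))

/-!
Let `p` enumerate the occurrences of `u` in `x`, so that `D_u(x)ₙ` codes the return word
`x[p n, p (n+1))`. Then `Θ_{x,u}` maps the factor `D_u(x)[a, a+m)` to `x[p a, p (a+m))`, and this
factor followed by `u` fixes all occurrences of `u` inside it, hence fixes `D_u(x)[a, a+m)`.
Consequently the occurrences of `w = Θ_{x,u}(v)u` are exactly the `p n` with `v` occurring at `n`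
in `D_u(x)`: they are enumerated by `p ∘ q`, where `q` enumerates the occurrences of `v`. So the
return words to `w` are the `Θ_{x,u}`-images of the return words to `v`, and distinct ones stay
distinct. The two derived sequences thus have the same equality pattern, and since both number
their letters by first appearance, they coincide.
-/

section Subwords

@[simp]
lemma subword_length (x : ℤ → A) (i : ℤ) (n : ℕ) : (subword x i n).length = n := by
  simp [subword]

lemma subword_eq_iff {x : ℤ → A} {i j : ℤ} {n : ℕ} :
    subword x i n = subword x j n ↔ ∀ k < n, x (i + k) = x (j + k) := by
  simp [subword, List.ofFn_inj, funext_iff, Fin.forall_iff]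

lemma occursAt_iff_subword_eq {x : ℤ → A} {u : List A} {i : ℤ} :
    occursAt x u i ↔ subword x i u.length = u := by
  simp [occursAt, subword, List.ext_get_iff, Fin.forall_iff]

lemma subword_add (x : ℤ → A) (i : ℤ) (m n : ℕ) :
    subword x i (m + n) = subword x i m ++ subword x (i + m) n := by
  simp [subword, List.ofFn_add, add_assoc]

lemma subword_succ (x : ℤ → A) (i : ℤ) (n : ℕ) :
    subword x i (n + 1) = subword x i n ++ [x (i + n)] := by
  rw [subword_add]
  simp [subword]

lemma subword_eq_subword_of_le {x : ℤ → A} {i j : ℤ} {n : ℕ}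
    (h : subword x i n = subword x j n) (δ m : ℕ) (hm : δ + m ≤ n) :
    subword x (i + δ) m = subword x (j + δ) m := by
  rw [subword_eq_iff] at h ⊢
  intro k hk
  simpa [add_assoc] using h (δ + k) (by omega)

lemma occursAt_iff_of_subword_eq {x : ℤ → A} {u : List A} {i j δ : ℤ} {n : ℕ}
    (h : subword x i n = subword x j n) (hδ : 0 ≤ δ) (hn : δ + u.length ≤ n) :
    occursAt x u (i + δ) ↔ occursAt x u (j + δ) := by
  have := subword_eq_subword_of_le h δ.toNat u.length (by omega)
  rw [Int.toNat_of_nonneg hδ] at this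
  rw [occursAt_iff_subword_eq, occursAt_iff_subword_eq, this]

end Subwords

section OccurrenceEnumeration

variable {x : ℤ → A} {u : List A} {p q : ℤ → ℤ}

lemma IsOccEnum.strictMono (hp : IsOccEnum x u p) : StrictMono p := hp.2.1

lemma IsOccEnum.monotone (hp : IsOccEnum x u p) : Monotone p := hp.strictMono.monotone

lemma IsOccEnum.occurs (hp : IsOccEnum x u p) (n : ℤ) : occursAt x u (p n) := hp.2.2.1 n

lemma IsOccEnum.exists_eq (hp : IsOccEnum x u p) {i : ℤ} (hi : occursAt x u i) :
    ∃ n, p n = i :=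
  hp.2.2.2 i hi

lemma IsOccEnum.succ_le (hp : IsOccEnum x u p) {n i : ℤ} (hi : occursAt x u i) (h : p n < i) :
    p (n + 1) ≤ i := by
  obtain ⟨m, rfl⟩ := hp.exists_eq hi
  exact hp.monotone (hp.strictMono.lt_iff_lt.mp h)

lemma IsOccEnum.le_sub_one (hp : IsOccEnum x u p) {n i : ℤ} (hi : occursAt x u i) (h : i < p n) :
    i ≤ p (n - 1) := by
  obtain ⟨m, rfl⟩ := hp.exists_eq hi
  exact hp.monotone (Int.le_sub_one_of_lt (hp.strictMono.lt_iff_lt.mp h))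

lemma IsOccEnum.unique (hp : IsOccEnum x u p) (hq : IsOccEnum x u q) : p = q := by
  funext n
  induction n using Int.induction_on with
  | zero => rw [hp.1, hq.1]
  | succ n ih =>
    exact le_antisymm (hp.succ_le (hq.occurs _) (ih ▸ hq.strictMono (lt_add_one _)))
      (hq.succ_le (hp.occurs _) (ih ▸ hp.strictMono (lt_add_one _)))
  | pred n ih =>
    exact le_antisymm (hq.le_sub_one (hp.occurs _) (ih ▸ hp.strictMono (sub_one_lt _)))
      (hp.le_sub_one (hq.occurs _) (ih ▸ hq.strictMono (sub_one_lt _)))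

lemma IsOccEnum.subword_add_length (hp : IsOccEnum x u p) {a b : ℤ} (hab : a ≤ b) :
    subword x (p a) ((p b - p a).toNat + u.length) = subword x (p a) (p b - p a).toNat ++ u := by
  rw [subword_add, Int.toNat_of_nonneg (sub_nonneg.mpr (hp.monotone hab)), add_sub_cancel,
    occursAt_iff_subword_eq.mp (hp.occurs b)]

lemma IsOccEnum.exists_sub_eq_of_subword_eq (hp : IsOccEnum x u p) {a i : ℤ} {m : ℕ}
    (h : subword x i ((p (a + m) - p a).toNat + u.length) =
      subword x (p a) ((p (a + m) - p a).toNat + u.length)) :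
    ∃ b, p b = i ∧ ∀ j ≤ m, p (b + j) - i = p (a + j) - p a := by
  have hocc : ∀ δ, 0 ≤ δ → δ ≤ p (a + m) - p a →
      (occursAt x u (i + δ) ↔ occursAt x u (p a + δ)) :=
    fun δ h₀ h₁ => occursAt_iff_of_subword_eq h h₀ (by omega)
  have ham : p a ≤ p (a + m) := hp.monotone (by omega)
  have hi : occursAt x u i := by simpa using (hocc 0 le_rfl (by omega)).mpr (by simpa using hp.occurs a)
  obtain ⟨b, rfl⟩ := hp.exists_eq hi
  refine ⟨b, rfl, fun j hj => ?_⟩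
  induction j with
  | zero => simp
  | succ j ih =>
    have ih := ih (by omega)
    rw [Nat.cast_succ, ← add_assoc, ← add_assoc]
    have haj : p a ≤ p (a + j) := hp.monotone (by omega)
    have hja : p (a + j) < p (a + j + 1) := hp.strictMono (lt_add_one _)
    have hjb : p (b + j) < p (b + j + 1) := hp.strictMono (lt_add_one _)
    have hjm : p (a + j + 1) ≤ p (a + m) := hp.monotone (by omega)
    have hle : p (b + j + 1) ≤ p b + (p (a + j + 1) - p a) :=
      hp.succ_le ((hocc _ (by omega) (by omega)).mpr (by rw [add_sub_cancel]; exact hp.occurs _))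
        (by omega)
    have hge : p (a + j + 1) ≤ p a + (p (b + j + 1) - p b) :=
      hp.succ_le ((hocc _ (by omega) (by omega)).mp (by rw [add_sub_cancel]; exact hp.occurs _))
        (by omega)
    omega

end OccurrenceEnumeration

section ReturnCoding

variable {x : ℤ → A} {u : List A} {p q : ℤ → ℤ} {Θ : B → List A} {y : ℤ → B} {v : List B}

lemma wordApply_subword (hp : Monotone p) (hΘ : ∀ n, Θ (y n) = retWordAt x p n) (a : ℤ) (k : ℕ) :
    wordApply Θ (subword y a k) = subword x (p a) (p (a + k) - p a).toNat := by
  induction k with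
  | zero => simp [wordApply, subword]
  | succ k ih =>
    have hk : p a ≤ p (a + k) := hp (by omega)
    have hk₁ : p (a + k) ≤ p (a + k + 1) := hp (by omega)
    rw [subword_succ, wordApply, List.flatMap_append, ← wordApply, ih, List.flatMap_singleton, hΘ,
      retWordAt, Nat.cast_succ, ← add_assoc,
      show (p (a + k + 1) - p a).toNat = (p (a + k) - p a).toNat + (p (a + k + 1) - p (a + k)).toNat
        by omega, subword_add, Int.toNat_of_nonneg (sub_nonneg.mpr hk), add_sub_cancel]

lemma retWordAt_comp (hp : Monotone p) (hΘ : ∀ n, Θ (y n) = retWordAt x p n) (hq : Monotone q)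
    (n : ℤ) : retWordAt x (p ∘ q) n = wordApply Θ (retWordAt y q n) := by
  rw [retWordAt, retWordAt, wordApply_subword hp hΘ,
    Int.toNat_of_nonneg (sub_nonneg.mpr (hq (by omega))), add_sub_cancel, Function.comp_apply,
    Function.comp_apply]

lemma subword_eq_wordApply_append (hp : IsOccEnum x u p) (hΘ : ∀ n, Θ (y n) = retWordAt x p n)
    {n : ℤ} (hv : occursAt y v n) :
    subword x (p n) ((p (n + v.length) - p n).toNat + u.length) = wordApply Θ v ++ u := by
  rw [hp.subword_add_length (by omega), ← wordApply_subword hp.monotone hΘ,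
    occursAt_iff_subword_eq.mp hv]

lemma occursAt_wordApply_append (hp : IsOccEnum x u p) (hΘ : ∀ n, Θ (y n) = retWordAt x p n)
    {n : ℤ} (hv : occursAt y v n) : occursAt x (wordApply Θ v ++ u) (p n) := by
  have h := subword_eq_wordApply_append hp hΘ hv
  rw [occursAt_iff_subword_eq, ← h, subword_length]

lemma IsOccEnum.exists_subword_eq_of_subword_eq (hp : IsOccEnum x u p)
    (hy : ∀ n m, y n = y m ↔ retWordAt x p n = retWordAt x p m) {a i : ℤ} {m : ℕ}
    (h : subword x i ((p (a + m) - p a).toNat + u.length) =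
      subword x (p a) ((p (a + m) - p a).toNat + u.length)) :
    ∃ b, p b = i ∧ p (b + m) - i = p (a + m) - p a ∧ subword y b m = subword y a m := by
  obtain ⟨b, rfl, hb⟩ := hp.exists_sub_eq_of_subword_eq h
  refine ⟨b, rfl, hb m le_rfl, subword_eq_iff.mpr fun k hk => (hy _ _).mpr ?_⟩
  have h₀ := hb k hk.le
  have h₁ := hb (k + 1) hk
  rw [Nat.cast_succ, ← add_assoc, ← add_assoc] at h₁
  have hk₀ : p a ≤ p (a + k) := hp.monotone (by omega)
  have hk₁ : p (a + k) ≤ p (a + k + 1) := hp.monotone (by omega)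
  have hkm : p (a + k + 1) ≤ p (a + m) := hp.monotone (by omega)
  have := subword_eq_subword_of_le h (p (a + k) - p a).toNat (p (a + k + 1) - p (a + k)).toNat
    (by omega)
  rw [show p b + ((p (a + k) - p a).toNat : ℤ) = p (b + k) by omega,
    show p a + ((p (a + k) - p a).toNat : ℤ) = p (a + k) by omega] at this
  rw [retWordAt, retWordAt, show (p (b + k + 1) - p (b + k)).toNat
    = (p (a + k + 1) - p (a + k)).toNat by omega, this]

lemma exists_occursAt_of_occursAt_wordApply_append (hp : IsOccEnum x u p)
    (hΘ : ∀ n, Θ (y n) = retWordAt x p n)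
    (hy : ∀ n m, y n = y m ↔ retWordAt x p n = retWordAt x p m) {n₀ i : ℤ}
    (hv : occursAt y v n₀) (hi : occursAt x (wordApply Θ v ++ u) i) :
    ∃ n, p n = i ∧ occursAt y v n := by
  have hw := subword_eq_wordApply_append hp hΘ hv
  have hlen := congrArg List.length hw
  rw [subword_length] at hlen
  obtain ⟨n, hn, -, hsub⟩ := hp.exists_subword_eq_of_subword_eq hy (i := i)
    (by rw [hw, hlen]; exact occursAt_iff_subword_eq.mp hi)
  exact ⟨n, hn, occursAt_iff_subword_eq.mpr (hsub.trans (occursAt_iff_subword_eq.mp hv))⟩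

lemma isOccEnum_comp (hp : IsOccEnum x u p) (hΘ : ∀ n, Θ (y n) = retWordAt x p n)
    (hy : ∀ n m, y n = y m ↔ retWordAt x p n = retWordAt x p m) (hq : IsOccEnum y v q) :
    IsOccEnum x (wordApply Θ v ++ u) (p ∘ q) := by
  refine ⟨by simp [hq.1, hp.1], hp.strictMono.comp hq.strictMono,
    fun n => occursAt_wordApply_append hp hΘ (hq.occurs n), fun i hi => ?_⟩
  obtain ⟨n, rfl, hn⟩ := exists_occursAt_of_occursAt_wordApply_append hp hΘ hy (hq.occurs 0) hi
  obtain ⟨m, rfl⟩ := hq.exists_eq hn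
  exact ⟨m, rfl⟩

lemma subword_eq_of_wordApply_eq (hp : IsOccEnum x u p) (hΘ : ∀ n, Θ (y n) = retWordAt x p n)
    (hy : ∀ n m, y n = y m ↔ retWordAt x p n = retWordAt x p m) {a b : ℤ} {m k : ℕ}
    (h : wordApply Θ (subword y a m) = wordApply Θ (subword y b k)) :
    subword y a m = subword y b k := by
  rw [wordApply_subword hp.monotone hΘ, wordApply_subword hp.monotone hΘ] at h
  have hlen := congrArg List.length h
  simp only [subword_length] at hlen
  have hext : subword x (p b) ((p (a + m) - p a).toNat + u.length)
      = subword x (p a) ((p (a + m) - p a).toNat + u.length) := by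
    rw [hp.subword_add_length (by omega), h, hlen, ← hp.subword_add_length (by omega)]
  obtain ⟨c, hc, hend, hsub⟩ := hp.exists_subword_eq_of_subword_eq hy hext
  obtain rfl := hp.strictMono.injective hc
  have ham : p a ≤ p (a + m) := hp.monotone (by omega)
  have hck : p c ≤ p (c + k) := hp.monotone (by omega)
  obtain rfl : m = k := by
    have := hp.strictMono.injective (show p (c + m) = p (c + k) by omega)
    omega
  exact hsub.symm

end ReturnCoding

section FirstOccurrenceNumbering

open Finset

lemma image_range_eq_range_card {f : ℕ → ℕ} (hf : ∀ n, f n ≤ ((range n).image f).card) (n : ℕ) :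
    (range n).image f = range ((range n).image f).card := by
  induction n with
  | zero => simp
  | succ n ih =>
    rw [range_add_one, image_insert]
    by_cases hn : f n ∈ (range n).image f
    · rw [Finset.insert_eq_self.mpr hn]
      exact ih
    · have hfn : f n = ((range n).image f).card := by
        rw [ih, Finset.mem_range, not_lt] at hn
        exact le_antisymm (hf n) hn
      rw [card_insert_of_notMem hn, range_add_one, ← ih, hfn]

lemma eq_card_image_range_of_notMem {f : ℕ → ℕ} (hf : ∀ n, f n ≤ ((range n).image f).card)
    {n : ℕ} (hn : f n ∉ (range n).image f) : f n = ((range n).image f).card := by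
  rw [image_range_eq_range_card hf, Finset.mem_range, not_lt] at hn
  exact le_antisymm (hf n) hn

lemma eq_of_forall_eq_iff_eq {f g : ℕ → ℕ} (hf : ∀ n, f n ≤ ((range n).image f).card)
    (hg : ∀ n, g n ≤ ((range n).image g).card) (h : ∀ m n, f m = f n ↔ g m = g n) : f = g := by
  funext n
  induction n using Nat.strong_induction_on with
  | _ n ih =>
    by_cases hn : ∃ m < n, f m = f n
    · obtain ⟨m, hm, hfm⟩ := hn
      rw [← hfm, ih m hm, (h m n).mp hfm]
    · have hfn : f n ∉ (range n).image f := by simpa using hn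
      have hgn : g n ∉ (range n).image g := by simpa [← h] using hn
      rw [eq_card_image_range_of_notMem hf hfn, eq_card_image_range_of_notMem hg hgn,
        Finset.image_congr fun m hm => ih m (Finset.mem_range.mp hm)]

lemma ncard_setOf_exists_lt_eq (y : ℤ → ℕ) (n : ℕ) :
    Set.ncard {k | ∃ m : ℕ, m < n ∧ y m = k} = ((range n).image fun m : ℕ => y m).card := by
  rw [← Set.ncard_coe_finset]
  congr
  ext
  simp

lemma eq_of_forall_eq_iff_eq_of_forall_exists {y y' : ℤ → ℕ} (hrec : ∀ n : ℤ, ∃ m : ℕ, y m = y n)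
    (hy : ∀ n : ℕ, y n ≤ Set.ncard {k | ∃ m : ℕ, m < n ∧ y m = k})
    (hy' : ∀ n : ℕ, y' n ≤ Set.ncard {k | ∃ m : ℕ, m < n ∧ y' m = k})
    (h : ∀ m n, y m = y n ↔ y' m = y' n) : y = y' := by
  have hnat : (fun n : ℕ => y n) = fun n : ℕ => y' n :=
    eq_of_forall_eq_iff_eq (fun n => ncard_setOf_exists_lt_eq y n ▸ hy n)
      (fun n => ncard_setOf_exists_lt_eq y' n ▸ hy' n) fun m n => h m n
  funext n
  obtain ⟨m, hm⟩ := hrec n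
  rw [← hm, congrFun hnat m, (h m n).mp hm]

end FirstOccurrenceNumbering

theorem derived_sequence_composition_general {A : Type*} (x : ℤ → A)
    (u : List A)
    (Θu : ℕ → List A) (yu : ℤ → ℕ) (hcu : IsReturnCoding x u Θu yu)
    (v : List ℕ)
    (w : List A) (hw : w = wordApply Θu v ++ u)
    (Θv : ℕ → List ℕ) (yv : ℤ → ℕ) (hcv : IsReturnCoding yu v Θv yv)
    (Θw : ℕ → List A) (yw : ℤ → ℕ) (hcw : IsReturnCoding x w Θw yw) :
    occursAt x w 0 ∧ yv = yw ∧
      ∀ k ∈ usedLetters yw, wordApply Θu (Θv k) = Θw k := by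
  obtain ⟨p, hp, hΘu, hyu, -, -⟩ := hcu
  obtain ⟨q, hq, hΘv, hyv, hyv_rec, hyv_num⟩ := hcv
  obtain ⟨r, hr, hΘw, hyw, -, hyw_num⟩ := hcw
  subst hw
  have hrpq : r = p ∘ q := hr.unique (isOccEnum_comp hp hΘu hyu hq)
  have hret : ∀ n, retWordAt x r n = wordApply Θu (retWordAt yu q n) := by
    rw [hrpq]
    exact retWordAt_comp hp.monotone hΘu hq.monotone
  have hyvw : yv = yw := by
    refine eq_of_forall_eq_iff_eq_of_forall_exists hyv_rec hyv_num hyw_num fun m n => ?_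
    rw [hyv, hyw, hret, hret]
    exact ⟨congrArg _, subword_eq_of_wordApply_eq hp hΘu hyu⟩
  refine ⟨hr.1 ▸ hr.occurs 0, hyvw, ?_⟩
  rintro k ⟨n, rfl⟩
  rw [hΘw, ← hyvw, hΘv, hret]

/-- for a uniformly recurrent x, a nonempty prefix u of x, a nonempty
prefix v of the derived sequence D_u(x), and w = Θ_{x,u}(v)u: w is a prefix of x,
D_v(D_u(x)) = D_w(x), and Θ_{x,u} ∘ Θ_{D_u(x),v} = Θ_{x,w}. -/
theorem derived_sequence_composition {A : Type*} (x : ℤ → A)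
    (hur : UniformlyRecurrent x)
    (u : List A) (hu : u ≠ []) (hupref : occursAt x u 0)
    (Θu : ℕ → List A) (yu : ℤ → ℕ) (hcu : IsReturnCoding x u Θu yu)
    (v : List ℕ) (hv : v ≠ []) (hvpref : occursAt yu v 0)
    (w : List A) (hw : w = wordApply Θu v ++ u)
    (Θv : ℕ → List ℕ) (yv : ℤ → ℕ) (hcv : IsReturnCoding yu v Θv yv)
    (Θw : ℕ → List A) (yw : ℤ → ℕ) (hcw : IsReturnCoding x w Θw yw) :
    occursAt x w 0 ∧ yv = yw ∧
      ∀ k ∈ usedLetters yw, wordApply Θu (Θv k) = Θw k :=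
  derived_sequence_composition_general x u Θu yu hcu v w hw Θv yv hcv Θw yw hcw

end PisotDE
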